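/- Let G = N ∗_L (L × K) be an amalgamated free product where L is a subgroup of N, and let φ: G → N × K be the homomorphism induced by the inclusion N ↪ N × K (n ↦ (n,1)) and the inclusion L × K ↪ N × K. If N and K are torsion-free elementary amenable, then G has the factorization property. -/

import Mathlib

universe u

/-- The class of elementary amenable groups: the smallest class of groups containing
all finite groups and all abelian groups, closed under subgroups, quotients,
extensions, and directed unions (and isomorphism). -/
inductive ElementaryAmenable : ∀ (G : Type u) [Group G], Prop
  | of_finite (G : Type u) [Group G] (h : Finite G) : ElementaryAmenable G
  | of_abelian (G : Type u) [Group G] (h : ∀ a b : G, a * b = b * a) : ElementaryAmenable G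
  | of_subgroup (G : Type u) [Group G] (H : Subgroup G) (h : ElementaryAmenable G) :
      ElementaryAmenable H
  | of_quotient (G : Type u) [Group G] (N : Subgroup G) [N.Normal] (h : ElementaryAmenable G) :
      ElementaryAmenable (G ⧸ N)
  | of_extension (G : Type u) [Group G] (N : Subgroup G) [N.Normal]
      (hN : ElementaryAmenable N) (hQ : ElementaryAmenable (G ⧸ N)) : ElementaryAmenable G
  | of_directedUnion (G : Type u) [Group G] (ι : Type u) (K : ι → Subgroup G)
      (hdir : Directed (· ≤ ·) K) (hsup : (⨆ i, K i) = ⊤)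
      (h : ∀ i, ElementaryAmenable (K i)) : ElementaryAmenable G
  | of_mulEquiv (G H : Type u) [Group G] [Group H] (e : G ≃* H) (h : ElementaryAmenable G) :
      ElementaryAmenable H

/-- A monoid is torsion-free if no non-identity element has finite order
(the definition Mathlib had under this name, since removed). -/
def Monoid.IsTorsionFree (G : Type*) [Monoid G] : Prop :=
  ∀ g : G, g ≠ 1 → ¬IsOfFinOrder g

/-- A group `H` has the factorization property if every homomorphism from `H` to a
finite group factors through a torsion-free elementary amenable group. -/
def HasFactorizationProperty (H : Type u) [Group H] : Prop :=
  ∀ (P : GrpCat.{u}), Finite P → ∀ f : H →* P,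
    ∃ (M : GrpCat.{u}) (g : H →* M) (h : (M : Type u) →* P),
      Monoid.IsTorsionFree M ∧ ElementaryAmenable M ∧ h.comp g = f

/-- The two vertex groups `N` and `L × K` of the amalgamated product `N ∗_L (L × K)`,
indexed by `Bool`. -/
def AmalgFactor (N K : Type u) [Group N] [Group K] (L : Subgroup N) : Bool → Type u
  | true => N
  | false => (↥L × K)

instance instGroupAmalgFactor (N K : Type u) [Group N] [Group K] (L : Subgroup N) :
    ∀ b, Group (AmalgFactor N K L b)
  | true => inferInstanceAs (Group N)
  | false => inferInstanceAs (Group (↥L × K))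

/-- The two inclusions of `L` into the vertex groups of `N ∗_L (L × K)`. -/
def amalgMap (N K : Type u) [Group N] [Group K] (L : Subgroup N) :
    ∀ b, ↥L →* AmalgFactor N K L b
  | true => L.subtype
  | false => MonoidHom.inl ↥L K

/-!
Let `G = N ∗_L (L × K)` and `f : G → P` with `P` finite. Put `T = P × N × K`, `ψ = (f, φ) : G → T`,
and let `A`, `B`, `C ≤ T` be the images of `N`, `L × K`, `L`; consider the graph with edges `T ⧸ C`
and vertices `T ⧸ A ⊔ T ⧸ B`, the edge `tC` joining `tA` to `tB`. Sending `g` to `(c, ψ g)`, with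
`c` the image of the path from the vertex `N` to its translate by `g` in the Bass–Serre tree, is a
homomorphism into the subgroup of `ℤ[T ⧸ C] ⋊ T` of pairs `(c, t)` with `∂c = tA - A`. This group
is abelian-by-`T`, hence elementary amenable, and projecting to `P` recovers `f`. It is
torsion-free: a `t ≠ 1` of prime order `p` fixes no vertex, as `A` and `B` are torsion-free, so
`t`-invariant chains on the vertices have degree divisible by `p`; but for a torsion element
`(c, t)`, `c` is a coboundary `t • v - v`, and then `∂v - A` and the `B`-part of `∂v` are such
invariant chains, of degrees `deg v - 1` and `deg v`.
-/

open Function Finsupp MulAction Monoid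

attribute [local instance] Finsupp.comapDistribMulAction

theorem MonoidHom.range_inl_eq_ker_snd {A B : Type*} [Group A] [Group B] :
    (MonoidHom.inl A B).range = (MonoidHom.snd A B).ker := by
  ext ⟨a, b⟩
  simp [eq_comm, Subgroup.mem_prod]

namespace ElementaryAmenable

theorem of_surjective {G Q : Type u} [Group G] [Group Q] (f : G →* Q) (hf : Surjective f)
    (hker : ElementaryAmenable f.ker) (hQ : ElementaryAmenable Q) : ElementaryAmenable G :=
  of_extension G f.ker hker
    (of_mulEquiv Q _ (QuotientGroup.quotientKerEquivOfSurjective f hf).symm hQ)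

theorem prod {A B : Type u} [Group A] [Group B] (hA : ElementaryAmenable A)
    (hB : ElementaryAmenable B) : ElementaryAmenable (A × B) :=
  of_surjective (MonoidHom.snd A B) Prod.snd_surjective
    (of_mulEquiv A _ ((MonoidHom.ofInjective (f := MonoidHom.inl A B)
      fun _ _ h => congrArg Prod.fst h).trans
        (MulEquiv.subgroupCongr MonoidHom.range_inl_eq_ker_snd)) hA) hB

theorem semidirectProduct {A G : Type u} [CommGroup A] [Group G] (φ : G →* MulAut A)
    (hG : ElementaryAmenable G) : ElementaryAmenable (A ⋊[φ] G) :=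
  of_surjective SemidirectProduct.rightHom SemidirectProduct.rightHom_surjective
    (of_mulEquiv A _ ((MonoidHom.ofInjective SemidirectProduct.inl_injective).trans
      (MulEquiv.subgroupCongr SemidirectProduct.range_inl_eq_ker_rightHom))
      (of_abelian A mul_comm)) hG

end ElementaryAmenable

namespace Monoid.IsTorsionFree

variable {G H : Type*} [Group G] [Group H]

theorem of_injective {f : G →* H} (hf : Injective f) (hH : IsTorsionFree H) :
    IsTorsionFree G := fun g hg hfin =>
  hH (f g) (fun h => hg (hf (h.trans f.map_one.symm))) (f.isOfFinOrder hfin)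

theorem range {f : G →* H} (hf : Injective f) (hG : IsTorsionFree G) : IsTorsionFree f.range :=
  of_injective (f := (MonoidHom.ofInjective hf).symm.toMonoidHom) (MulEquiv.injective _) hG

theorem prod (hG : IsTorsionFree G) (hH : IsTorsionFree H) : IsTorsionFree (G × H) := by
  intro x hx hfin
  have h₁ : x.1 = 1 := by_contra fun h => hG _ h ((MonoidHom.fst G H).isOfFinOrder hfin)
  have h₂ : x.2 = 1 := by_contra fun h => hH _ h ((MonoidHom.snd G H).isOfFinOrder hfin)
  exact hx (Prod.ext h₁ h₂)

theorem of_pow_prime_eq_one (h : ∀ (p : ℕ) (g : G), p.Prime → g ^ p = 1 → g = 1) :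
    IsTorsionFree G := by
  intro g hg hfin
  have hne : orderOf g ≠ 1 := by rwa [Ne, orderOf_eq_one_iff]
  have hp : (orderOf g).minFac.Prime := Nat.minFac_prime hne
  have hord := orderOf_pow_orderOf_div hfin.orderOf_pos.ne' (Nat.minFac_dvd (orderOf g))
  have := h _ _ hp (hord ▸ pow_orderOf_eq_one _)
  rw [this, orderOf_one] at hord
  exact hp.one_lt.ne hord

end Monoid.IsTorsionFree

theorem MulAction.period_eq_of_prime {T S : Type*} [Group T] [MulAction T S] {p : ℕ}
    (hp : p.Prime) {q : T} (hq : q ^ p = 1) {x : S} (hx : q • x ≠ x) : period q x = p :=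
  (hp.eq_one_or_self_of_dvd _ (pow_smul_eq_iff_period_dvd.mp (by rw [hq, one_smul]))).resolve_left
    (mt period_eq_one_iff.mp hx)

theorem MulAction.injOn_pow_smul_Iio_period {T S : Type*} [Group T] [MulAction T S] (q : T)
    (x : S) : Set.InjOn (fun i : ℕ => q ^ i • x) (Set.Iio (period q x)) :=
  fun _ hi _ hj h => Function.iterate_injOn_Iio_minimalPeriod hi hj
    (by simpa only [smul_iterate_apply] using h)

namespace Finsupp

variable {T S : Type*} [Group T] [MulAction T S]

theorem mapDomain_comapSMul {S' M : Type*} [AddCommMonoid M] [MulAction T S']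
    {f : S → S'} (hf : ∀ (t : T) x, f (t • x) = t • f x) (t : T) (u : S →₀ M) :
    mapDomain f (t • u) = t • mapDomain f u := by
  simp only [comapSMul_def, ← mapDomain_comp]
  exact congrArg (mapDomain · u) (funext (hf t))

theorem smul_sum_range_pow_smul {M : Type*} [AddCommMonoid M] {p : ℕ} {q : T}
    (hq : q ^ p = 1) (u : S →₀ M) :
    q • ∑ i ∈ Finset.range p, q ^ i • u = ∑ i ∈ Finset.range p, q ^ i • u := by
  rcases p with _ | p
  · simp
  simp only [Finset.smul_sum, smul_smul, ← pow_succ']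
  rw [Finset.sum_range_succ, hq, ← pow_zero q]
  exact (Finset.sum_range_succ' (fun i => q ^ i • u) p).symm

variable (q : T)

noncomputable def smulSubRange : AddSubgroup (S →₀ ℤ) :=
  (DistribSMul.toAddMonoidHom (S →₀ ℤ) q - AddMonoidHom.id _).range

theorem smul_sub_mem_smulSubRange (u : S →₀ ℤ) : q • u - u ∈ smulSubRange q := ⟨u, rfl⟩

theorem zpow_smul_sub_mem_smulSubRange (k : ℤ) (u : S →₀ ℤ) :
    q ^ k • u - u ∈ smulSubRange q := by
  induction k using Int.induction_on generalizing u with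
  | zero => simp
  | succ k ih =>
    have := add_mem (ih (q • u)) (smul_sub_mem_smulSubRange q u)
    rwa [smul_smul, ← zpow_add_one, sub_add_sub_cancel] at this
  | pred k ih =>
    have := sub_mem (ih (q⁻¹ • u)) (smul_sub_mem_smulSubRange q (q⁻¹ • u))
    rwa [smul_smul, ← zpow_sub_one, smul_inv_smul, sub_sub_sub_cancel_right] at this

theorem sub_mapDomain_out_mem_smulSubRange (u : S →₀ ℤ) :
    u - mapDomain (fun x => (Quotient.mk (orbitRel (Subgroup.zpowers q) S) x).out) u
      ∈ smulSubRange q := by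
  induction u using Finsupp.induction_linear with
  | zero => simp
  | add u v hu hv =>
    rw [mapDomain_add, add_sub_add_comm]
    exact add_mem hu hv
  | single x a =>
    obtain ⟨⟨g, hg⟩, hgx⟩ := Quotient.mk_out (s := orbitRel (Subgroup.zpowers q) S) x
    obtain ⟨k, rfl⟩ := Subgroup.mem_zpowers_iff.mp hg
    have hkx : q ^ k • x = (Quotient.mk _ x).out := hgx
    rw [mapDomain_single, ← hkx, ← comapSMul_single, ← neg_sub]
    exact neg_mem (zpow_smul_sub_mem_smulSubRange q k _)

/-- The image of `u` in `ℤ[S ⧸ ⟨q⟩]` is killed by `p`, hence vanishes, and the kernel of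
`ℤ[S] → ℤ[S ⧸ ⟨q⟩]` is spanned by the `q ^ k • x - x`. -/
theorem exists_smul_sub_eq_of_sum_pow_smul_eq_zero {p : ℕ} (hp : 0 < p) {u : S →₀ ℤ}
    (hu : ∑ i ∈ Finset.range p, q ^ i • u = 0) : ∃ v, q • v - v = u := by
  let π : S → orbitRel.Quotient (Subgroup.zpowers q) S := Quotient.mk _
  have hπ (i : ℕ) : mapDomain π (q ^ i • u) = mapDomain π u := by
    rw [comapSMul_def, ← mapDomain_comp]
    congr 1
    funext x
    exact Quotient.sound ⟨⟨q ^ i, pow_mem (Subgroup.mem_zpowers q) i⟩, rfl⟩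
  have hπu : mapDomain π u = 0 := by
    have := congrArg (mapDomain π) hu
    rw [mapDomain_finsetSum, Finset.sum_congr rfl fun i _ => hπ i, Finset.sum_const,
      Finset.card_range, mapDomain_zero] at this
    exact (smul_eq_zero.mp this).resolve_left hp.ne'
  have := sub_mapDomain_out_mem_smulSubRange q u
  rwa [show (fun x => (Quotient.mk _ x).out) = Quotient.out ∘ π from rfl, mapDomain_comp, hπu,
    mapDomain_zero, sub_zero] at this

/-- Subtract the part of `w` on the orbit of a point of its support: that orbit has `p` points,
on which `w` is constant. -/
theorem dvd_degree_of_smul_eq {p : ℕ} (hp : p.Prime) {q : T} (hq : q ^ p = 1)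
    (hfree : ∀ x : S, q • x ≠ x) {w : S →₀ ℤ} (hw : q • w = w) : (p : ℤ) ∣ w.degree := by
  classical
  induction hn : w.support.card using Nat.strong_induction_on generalizing w with
  | _ n ih =>
  obtain h0 | ⟨s, hs⟩ := w.support.eq_empty_or_nonempty
  · simp [support_eq_empty.mp h0]
  have hinj : Set.InjOn (fun i : ℕ => q ^ i • s) (Finset.range p) := by
    simpa [period_eq_of_prime hp hq (hfree s)] using injOn_pow_smul_Iio_period q s
  set O := (Finset.range p).image fun i => q ^ i • s
  have hwO : ∀ x ∈ O, w x = w s := by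
    simp only [O, Finset.mem_image]
    rintro _ ⟨i, -, rfl⟩
    have := congrArg (· (q ^ i • s)) (mem_stabilizer_iff.mp (pow_mem (mem_stabilizer_iff.mpr hw) i))
    rwa [comapSMul_apply, inv_smul_smul, eq_comm] at this
  set o := ∑ i ∈ Finset.range p, q ^ i • single s (w s)
  have ho_apply (x : S) : o x = if x ∈ O then w s else 0 := by
    simp only [o, comapSMul_single]
    rw [← Finset.sum_image (f := fun y => single y (w s)) hinj, finsetSum_apply]
    simp [O, single_apply]
  have ho_deg : o.degree = p * w s := by
    simp [o, map_sum]
  have hsupp : (w - o).support ⊂ w.support := by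
    refine Finset.ssubset_iff_of_subset (fun x hx => ?_) |>.mpr ⟨s, hs, ?_⟩
    · rw [mem_support_iff, sub_apply, ho_apply] at hx
      rw [mem_support_iff]
      split_ifs at hx with hxO
      · exact absurd (by rw [hwO x hxO, sub_self]) hx
      · simpa using hx
    · have hsO : s ∈ O := Finset.mem_image.mpr ⟨0, Finset.mem_range.mpr hp.pos, by simp⟩
      rw [mem_support_iff, not_not, sub_apply, ho_apply, if_pos hsO, sub_self]
  have hdvd := ih _ (hn ▸ Finset.card_lt_card hsupp) (w := w - o)
    (by rw [smul_sub, hw, smul_sum_range_pow_smul hq]) rfl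
  rw [← sub_add_cancel w o, map_add, ho_deg]
  exact dvd_add hdvd (dvd_mul_right _ _)

end Finsupp

section ChainGroup

variable {T : Type*} [Group T]

theorem QuotientGroup.coe_eq_coe_one_of_mem {C : Subgroup T} {t : T} (ht : t ∈ C) :
    (t : T ⧸ C) = ((1 : T) : T ⧸ C) :=
  QuotientGroup.eq.mpr (by simpa using ht)

theorem QuotientGroup.smul_ne_self_of_pow_eq_one {A : Subgroup T} (hA : IsTorsionFree A) {t : T}
    {n : ℕ} (hn : 0 < n) (ht : t ^ n = 1) (ht1 : t ≠ 1) (y : T ⧸ A) : t • y ≠ y := by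
  induction y using QuotientGroup.induction_on with
  | H g =>
  intro hfix
  have hmem : g⁻¹ * t⁻¹ * g ∈ A := by
    rw [MulAction.Quotient.smul_mk, smul_eq_mul, QuotientGroup.eq] at hfix
    simpa [mul_assoc] using hfix
  have hpow : (⟨_, hmem⟩ : A) ^ n = 1 := Subtype.ext <| by
    simpa [inv_pow, ht] using conj_pow (a := g⁻¹) (b := t⁻¹) (i := n)
  refine hA _ (fun h => ht1 ?_) (isOfFinOrder_iff_pow_eq_one.mpr ⟨n, hn, hpow⟩)
  have h := congrArg Subtype.val h
  simp only [OneMemClass.coe_one] at h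
  rwa [mul_assoc, inv_mul_eq_one, eq_comm, mul_eq_right, inv_eq_one] at h

theorem Finsupp.smul_single_coe {A : Subgroup T} (t g : T) (a : ℤ) :
    t • single (g : T ⧸ A) a = single ((t * g : T) : T ⧸ A) a := by
  rw [comapSMul_single, MulAction.Quotient.smul_coe, smul_eq_mul]

variable (T) in
noncomputable def permAut (S : Type*) [MulAction T S] : T →* MulAut (Multiplicative (S →₀ ℤ)) :=
  MonoidHom.mk' (fun t => AddEquiv.toMultiplicative (DistribMulAction.toAddAut T (S →₀ ℤ) t))
    fun a b => by ext x : 1; exact mul_smul a b x.toAdd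

@[simp]
theorem toAdd_permAut_apply {S : Type*} [MulAction T S] (t : T) (x : Multiplicative (S →₀ ℤ)) :
    (permAut T S t x).toAdd = t • x.toAdd := rfl

/-- Pairs `(c, t)` of an integral chain `c` on `T ⧸ C` and `t : T`, composed as the affine maps
`c' ↦ c + t • c'`. -/
abbrev ChainGroup (C : Subgroup T) : Type _ :=
  Multiplicative (T ⧸ C →₀ ℤ) ⋊[permAut T (T ⧸ C)] T

namespace ChainGroup

variable {C : Subgroup T}

theorem toAdd_mul_left (x y : ChainGroup C) :
    (x * y).left.toAdd = x.left.toAdd + x.right • y.left.toAdd := rfl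

theorem toAdd_inv_left (x : ChainGroup C) :
    x⁻¹.left.toAdd = -(x.right⁻¹ • x.left.toAdd) := by
  rw [← smul_neg]; rfl

theorem toAdd_pow_left (x : ChainGroup C) (n : ℕ) :
    (x ^ n).left.toAdd = ∑ i ∈ Finset.range n, x.right ^ i • x.left.toAdd := by
  induction n with
  | zero => rfl
  | succ n ih =>
    rw [pow_succ, toAdd_mul_left, ih, Finset.sum_range_succ, ← SemidirectProduct.rightHom_eq_right,
      map_pow]

end ChainGroup

noncomputable def cosetPushforward {C A : Subgroup T} (h : C ≤ A) :
    (T ⧸ C →₀ ℤ) →+ (T ⧸ A →₀ ℤ) :=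
  mapDomain.addMonoidHom (Subgroup.quotientMapOfLE h)

section cosetPushforward

variable {C A : Subgroup T} (h : C ≤ A)

theorem cosetPushforward_single (g : T) (a : ℤ) :
    cosetPushforward h (single (g : T ⧸ C) a) = single (g : T ⧸ A) a :=
  mapDomain_single

theorem cosetPushforward_smul (t : T) (u : T ⧸ C →₀ ℤ) :
    cosetPushforward h (t • u) = t • cosetPushforward h u :=
  mapDomain_comapSMul (fun t x => by induction x using QuotientGroup.induction_on; rfl) t u

theorem degree_cosetPushforward (u : T ⧸ C →₀ ℤ) : (cosetPushforward h u).degree = u.degree :=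
  degree_mapDomain _ _

end cosetPushforward

variable {A B C : Subgroup T} (hA : C ≤ A) (hB : C ≤ B)

/-- The pairs `(c, t)` whose chain `c` has boundary `tA - A`, the edge `tC` having boundary
`tA - tB`. -/
noncomputable def pathSubgroup : Subgroup (ChainGroup C) where
  carrier := {x | cosetPushforward hA x.left.toAdd =
      single (x.right : T ⧸ A) 1 - single ((1 : T) : T ⧸ A) 1 ∧
    cosetPushforward hB x.left.toAdd = 0}
  one_mem' := by simp
  mul_mem' := by
    rintro x y ⟨hx₁, hx₂⟩ ⟨hy₁, hy₂⟩
    simp only [Set.mem_ofPred_eq, ChainGroup.toAdd_mul_left, map_add, cosetPushforward_smul, hx₁,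
      hy₁, hx₂, hy₂, smul_sub, smul_single_coe, smul_zero, add_zero, SemidirectProduct.mul_right,
      mul_one]
    exact ⟨by abel, trivial⟩
  inv_mem' := by
    rintro x ⟨hx₁, hx₂⟩
    simp only [Set.mem_ofPred_eq, ChainGroup.toAdd_inv_left, map_neg, cosetPushforward_smul, hx₁,
      hx₂, smul_sub, smul_single_coe, smul_zero, neg_zero, SemidirectProduct.inv_right,
      inv_mul_cancel, mul_one]
    exact ⟨by abel, trivial⟩

theorem isTorsionFree_pathSubgroup (hAtf : IsTorsionFree A) (hBtf : IsTorsionFree B) :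
    IsTorsionFree (pathSubgroup hA hB) := by
  refine IsTorsionFree.of_pow_prime_eq_one fun p ⟨x, hx₁, hx₂⟩ hp hxp => ?_
  have hxp : x ^ p = 1 := congrArg Subtype.val hxp
  have htp : x.right ^ p = 1 := by
    rw [← SemidirectProduct.rightHom_eq_right, ← map_pow, hxp, map_one]
  have hnorm : ∑ i ∈ Finset.range p, x.right ^ i • x.left.toAdd = 0 := by
    rw [← ChainGroup.toAdd_pow_left, hxp]; rfl
  obtain ⟨v, hv⟩ := exists_smul_sub_eq_of_sum_pow_smul_eq_zero x.right hp.pos hnorm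
  by_cases ht : x.right = 1
  · refine Subtype.ext (SemidirectProduct.ext ?_ ht)
    rw [← ofAdd_toAdd x.left, ← hv, ht, one_smul, sub_self]; rfl
  exfalso
  rw [← hv, map_sub, cosetPushforward_smul] at hx₁ hx₂
  have hinvA : x.right • (cosetPushforward hA v - single ((1 : T) : T ⧸ A) 1) =
      cosetPushforward hA v - single ((1 : T) : T ⧸ A) 1 := by
    rwa [smul_sub, smul_single_coe, mul_one, sub_eq_sub_iff_sub_eq_sub]
  have hinvB : x.right • cosetPushforward hB v = cosetPushforward hB v := sub_eq_zero.mp hx₂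
  have h₁ := dvd_degree_of_smul_eq hp htp
    (QuotientGroup.smul_ne_self_of_pow_eq_one hAtf hp.pos htp ht) hinvA
  have h₂ := dvd_degree_of_smul_eq hp htp
    (QuotientGroup.smul_ne_self_of_pow_eq_one hBtf hp.pos htp ht) hinvB
  rw [map_sub, degree_cosetPushforward, degree_single] at h₁
  rw [degree_cosetPushforward] at h₂
  have h : (p : ℤ) ∣ 1 := by simpa using dvd_sub h₂ h₁
  exact hp.one_lt.ne' (by exact_mod_cast Int.eq_one_of_dvd_one (by positivity) h)

open SemidirectProduct

/-- Conjugation by `(-C, 1)` moves the base vertex from `A` to `B` across the edge `C`. -/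
noncomputable def edgeShift (C : Subgroup T) : ChainGroup C :=
  inl (.ofAdd (-single ((1 : T) : T ⧸ C) 1))

theorem toAdd_left_conj_edgeShift_inr (t : T) :
    (MulAut.conj (edgeShift C) (inr t)).left.toAdd =
      single (t : T ⧸ C) 1 - single ((1 : T) : T ⧸ C) 1 := by
  simp [edgeShift]
  abel

@[simp]
theorem right_conj_edgeShift_inr (t : T) : (MulAut.conj (edgeShift C) (inr t)).right = t := by
  simp [edgeShift]

theorem conj_edgeShift_inr_of_mem {t : T} (ht : t ∈ C) :
    MulAut.conj (edgeShift C) (inr t) = inr t := by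
  refine SemidirectProduct.ext ?_ (right_conj_edgeShift_inr t)
  rw [← ofAdd_toAdd (SemidirectProduct.left _), toAdd_left_conj_edgeShift_inr,
    QuotientGroup.coe_eq_coe_one_of_mem ht, sub_self]
  rfl

theorem inr_mem_pathSubgroup {t : T} (ht : t ∈ A) : inr t ∈ pathSubgroup hA hB :=
  ⟨by simp [QuotientGroup.coe_eq_coe_one_of_mem ht], by simp⟩

theorem conj_edgeShift_inr_mem_pathSubgroup {t : T} (ht : t ∈ B) :
    MulAut.conj (edgeShift C) (inr t) ∈ pathSubgroup hA hB := by
  refine ⟨?_, ?_⟩ <;>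
    rw [toAdd_left_conj_edgeShift_inr, map_sub, cosetPushforward_single, cosetPushforward_single]
  · rw [right_conj_edgeShift_inr]
  · rw [QuotientGroup.coe_eq_coe_one_of_mem ht, sub_self]

end ChainGroup

namespace MonoidHom

open PushoutI SemidirectProduct

variable {G : Bool → Type*} [∀ i, Group (G i)] {H : Type*} [Group H] {φ : ∀ i, H →* G i}
  {T : Type*} [Group T] (ψ : PushoutI φ →* T)

def vertexSubgroup (i : Bool) : Subgroup T := (ψ.comp (of i)).range

def edgeSubgroup : Subgroup T := (ψ.comp (base φ)).range

theorem apply_of_mem_vertexSubgroup (i : Bool) (x : G i) : ψ (of i x) ∈ ψ.vertexSubgroup i :=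
  ⟨x, rfl⟩

theorem apply_base_mem_edgeSubgroup (h : H) : ψ (base φ h) ∈ ψ.edgeSubgroup := ⟨h, rfl⟩

theorem edgeSubgroup_le_vertexSubgroup (i : Bool) : ψ.edgeSubgroup ≤ ψ.vertexSubgroup i := by
  rintro _ ⟨h, rfl⟩
  exact ⟨φ i h, by simp [of_apply_eq_base]⟩

noncomputable abbrev amalgPathSubgroup : Subgroup (ChainGroup ψ.edgeSubgroup) :=
  pathSubgroup (ψ.edgeSubgroup_le_vertexSubgroup true) (ψ.edgeSubgroup_le_vertexSubgroup false)

noncomputable def toChainGroupFactor (i : Bool) : G i →* ChainGroup ψ.edgeSubgroup :=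
  (MulAut.conj (if i then 1 else edgeShift ψ.edgeSubgroup)).toMonoidHom.comp
    (SemidirectProduct.inr.comp (ψ.comp (of i)))

theorem toChainGroupFactor_comp (i : Bool) :
    (ψ.toChainGroupFactor i).comp (φ i) = SemidirectProduct.inr.comp (ψ.comp (base φ)) := by
  ext h : 1
  cases i
  · simpa [toChainGroupFactor, of_apply_eq_base] using
      conj_edgeShift_inr_of_mem (ψ.apply_base_mem_edgeSubgroup h)
  · simp [toChainGroupFactor, of_apply_eq_base]

noncomputable def toChainGroup : PushoutI φ →* ChainGroup ψ.edgeSubgroup :=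
  lift ψ.toChainGroupFactor _ ψ.toChainGroupFactor_comp

theorem toChainGroup_of (i : Bool) (x : G i) :
    ψ.toChainGroup (of i x) =
      MulAut.conj (if i then 1 else edgeShift ψ.edgeSubgroup) (SemidirectProduct.inr (ψ (of i x))) :=
  lift_of _ _ _ x

theorem toChainGroup_mem (g : PushoutI φ) : ψ.toChainGroup g ∈ ψ.amalgPathSubgroup := by
  induction g using PushoutI.induction_on with
  | of i x =>
    rw [toChainGroup_of]
    cases i
    · exact conj_edgeShift_inr_mem_pathSubgroup _ _ (ψ.apply_of_mem_vertexSubgroup false x)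
    · simpa using inr_mem_pathSubgroup _ _ (ψ.apply_of_mem_vertexSubgroup true x)
  | base h =>
    rw [← of_apply_eq_base φ true, toChainGroup_of]
    simpa using inr_mem_pathSubgroup _ _ (ψ.apply_of_mem_vertexSubgroup true _)
  | mul x y hx hy => exact (map_mul ψ.toChainGroup x y).symm ▸ mul_mem hx hy

theorem rightHom_comp_toChainGroup : rightHom.comp ψ.toChainGroup = ψ := by
  refine PushoutI.hom_ext (fun i => MonoidHom.ext fun x => ?_) (MonoidHom.ext fun h => ?_)
  · cases i <;> simp [toChainGroup_of, edgeShift]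
  · simp [← of_apply_eq_base φ true, toChainGroup_of]

end MonoidHom

section AmalgToProd

open PushoutI

variable {N K : Type u} [Group N] [Group K] {L : Subgroup N}

def amalgFactorToProd : ∀ b, AmalgFactor N K L b →* N × K
  | true => MonoidHom.inl N K
  | false => L.subtype.prodMap (MonoidHom.id K)

theorem amalgFactorToProd_injective :
    ∀ b, Injective (amalgFactorToProd (N := N) (K := K) (L := L) b)
  | true => fun _ _ h => congrArg Prod.fst h
  | false => Injective.prodMap Subtype.val_injective injective_id

theorem isTorsionFree_amalgFactor (hN : IsTorsionFree N) (hK : IsTorsionFree K) :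
    ∀ b, IsTorsionFree (AmalgFactor N K L b)
  | true => hN
  | false => (hN.of_injective (f := L.subtype) Subtype.val_injective).prod hK

variable (N K L) in
/-- The map `φ` of the statement. -/
def amalgToProd : PushoutI (amalgMap N K L) →* N × K :=
  lift (K := N × K) amalgFactorToProd ((MonoidHom.inl N K).comp L.subtype) fun b => by
    cases b <;> rfl

theorem amalgToProd_comp_of (b : Bool) :
    (amalgToProd N K L).comp (of (φ := amalgMap N K L) b) = amalgFactorToProd b :=
  MonoidHom.ext fun x => by simp [amalgToProd]

end AmalgToProd

/-- If `N` and `K` are torsion-free elementary amenable, then the amalgamated free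
product `N ∗_L (L × K)` has the factorization property. -/
theorem amalg_hasFactorizationProperty (N K : Type u) [Group N] [Group K]
    (L : Subgroup N)
    (hNtf : Monoid.IsTorsionFree N) (hNea : ElementaryAmenable N)
    (hKtf : Monoid.IsTorsionFree K) (hKea : ElementaryAmenable K) :
    HasFactorizationProperty (Monoid.PushoutI (amalgMap N K L)) := by
  intro P hP f
  let ψ := f.prod (amalgToProd N K L)
  have hψ (b : Bool) : IsTorsionFree (ψ.vertexSubgroup b) := by
    have hinj : Injective ((MonoidHom.snd P (N × K)).comp (ψ.comp (PushoutI.of b))) := by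
      rw [← MonoidHom.comp_assoc, MonoidHom.snd_comp_prod, amalgToProd_comp_of]
      exact amalgFactorToProd_injective b
    exact .range (Injective.of_comp (f := MonoidHom.snd P (N × K)) hinj)
      (isTorsionFree_amalgFactor hNtf hKtf b)
  refine ⟨GrpCat.of ψ.amalgPathSubgroup, ψ.toChainGroup.codRestrict _ ψ.toChainGroup_mem,
    (MonoidHom.fst P (N × K)).comp (SemidirectProduct.rightHom.comp (Subgroup.subtype _)),
    isTorsionFree_pathSubgroup _ _ (hψ true) (hψ false),
    .of_subgroup _ _ (.semidirectProduct _ ((ElementaryAmenable.of_finite P hP).prod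
      (hNea.prod hKea))), ?_⟩
  exact MonoidHom.ext fun g =>
    congrArg Prod.fst (DFunLike.congr_fun ψ.rightHom_comp_toChainGroup g)
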